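/- Define recursively P_{n+1} = x·ẋ·P_n' − ((q_n/p)·ẋ² + (2n−1)·ẍ·x)·P_n, with P_1 = ẏx − (q_0/p)yẋ. If y = Σ_k c_k x^{q_k/p} is the Puiseux expansion with ord x = p, then P_n = (∏_{k=0}^{n−1} (q_n − q_k)/p)·c_n·ẋ^{2n−1}·x^{q_n/p} + higher order terms; in particular ord_t P_n ≥ q_n + (2n−1)(p−1). -/

import Mathlib

open PowerSeries

/-- Formal derivative d/dt of a power series. -/
noncomputable def pderiv' (f : PowerSeries ℂ) : PowerSeries ℂ :=
  PowerSeries.mk fun n => ((n : ℂ) + 1) * coeff (n + 1) f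

/-!
Write `x = ξ ^ p`. Since `ξ ^ Q` plays the role of `x ^ (Q / p)`, it satisfies the Euler-type
identity `x · (ξ ^ Q)' = (Q / p) · ẋ · ξ ^ Q`. Hence each term `ẋ ^ j · ξ ^ Q`
is an eigenvector of the operator defining the recursion: the map `f ↦ x ẋ f' − (b ẋ² + j ẍ x) f`
sends it to `(Q / p − b) · ẋ ^ (j + 2) · ξ ^ Q`, the `j ẍ x` term cancelling the derivative of
`ẋ ^ j`. Applied to the truncation `∑_{m ≤ M} c_m ξ ^ (q m)` of `y`, the recursion therefore
produces `∑_{m ≤ M} (∏_{k < n} (q m − q k) / p) c_m ẋ ^ (2n − 1) ξ ^ (q m)`, in which every term with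
`m < n` vanishes. The truncation error has order `> q M`, and each application of the operator
raises the order by at least `2 (p − 1)`, since `x`, `ẋ`, `ẍ` have orders `≥ p, p − 1, p − 2`.
Taking `M = n` gives the theorem.
-/

open Finset

theorem pderiv'_eq_derivative (f : PowerSeries ℂ) : pderiv' f = d⁄dX ℂ f := by
  ext n
  simp only [pderiv', coeff_mk, coeff_derivative]
  ring

namespace PowerSeries

theorem X_pow_sub_one_dvd_derivative {R : Type*} [CommSemiring R] {N : ℕ} {f : R⟦X⟧}
    (h : X ^ N ∣ f) : X ^ (N - 1) ∣ d⁄dX R f := by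
  rcases N with _ | N
  · simp
  obtain ⟨g, rfl⟩ := h
  rw [Derivation.leibniz, derivative_pow, smul_eq_mul, smul_eq_mul, Nat.add_sub_cancel]
  exact dvd_add (dvd_mul_of_dvd_left (pow_dvd_pow X N.le_succ) _)
    (dvd_mul_of_dvd_right (dvd_mul_of_dvd_left (dvd_mul_left _ _) _) _)

theorem X_pow_dvd_sub_sum_puiseux {R : Type*} [CommRing R] {ξ y : R⟦X⟧} {q : ℕ → ℕ}
    {c : ℕ → R} (hξ : constantCoeff ξ = 0) (hq : StrictMono q)
    (hy : ∀ n, coeff n y = ∑ k ∈ range (n + 1), c k * coeff n (ξ ^ q k)) (M : ℕ) :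
    X ^ (q M + 1) ∣ y - ∑ m ∈ range (M + 1), c m • ξ ^ q m := by
  have hvanish : ∀ i k, i < q k → c k * coeff i (ξ ^ q k) = 0 := fun i k hik => by
    rw [X_pow_dvd_iff.1 (pow_dvd_pow_of_dvd (X_dvd_iff.2 hξ) (q k)) i hik, mul_zero]
  rw [X_pow_dvd_iff]
  intro i hi
  -- both sums agree with the one over `range (i + M + 1)`: the added terms have `i < q k`
  have hextend (L : ℕ) (hL : L ≤ i + M) (hlt : ∀ k, L < k → i < q k) :
      ∑ k ∈ range (L + 1), c k * coeff i (ξ ^ q k) =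
        ∑ k ∈ range (i + M + 1), c k * coeff i (ξ ^ q k) :=
    sum_subset (range_subset_range.2 (by omega)) fun k _ hk =>
      hvanish i k (hlt k (by simpa [Nat.lt_succ_iff] using hk))
  rw [map_sub, map_sum, hy i, hextend i (by omega) fun k hk => hk.trans_le hq.le_apply]
  simp only [coeff_smul, smul_eq_mul]
  rw [hextend M (by omega) fun k hk => (Nat.lt_succ_iff.1 hi).trans_lt (hq hk), sub_self]

end PowerSeries

section Recursion

variable {K : Type*} [Field K]

theorem pow_mul_derivative_pow {p : ℕ} (hp : (p : K) ≠ 0) (ξ : K⟦X⟧) (Q : ℕ) :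
    ξ ^ p * d⁄dX K (ξ ^ Q) = C ((Q : K) / p) * d⁄dX K (ξ ^ p) * ξ ^ Q := by
  rcases Q with _ | Q
  · simp
  have hp1 : 1 ≤ p := Nat.one_le_iff_ne_zero.2 (by rintro rfl; exact hp Nat.cast_zero)
  have hC : C ((↑(Q + 1) : K) / p) * (p : K⟦X⟧) = (↑(Q + 1) : K⟦X⟧) := by
    rw [← map_natCast (C (R := K)), ← map_natCast (C (R := K)) (Q + 1), ← map_mul,
      div_mul_cancel₀ _ hp]
  have hpow : ξ ^ p * ξ ^ Q = ξ ^ (p - 1) * ξ ^ (Q + 1) := by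
    rw [← pow_add, ← pow_add]; congr 1; omega
  simp only [derivative_pow, Nat.add_sub_cancel]
  linear_combination (↑(Q + 1) : K⟦X⟧) * d⁄dX K ξ * hpow - ξ ^ (p - 1) * ξ ^ (Q + 1) * d⁄dX K ξ * hC

noncomputable def firstOp (x : K⟦X⟧) (b : K) : K⟦X⟧ →ₗ[K] K⟦X⟧ :=
  LinearMap.mulLeft K x ∘ₗ (d⁄dX K).toLinearMap - LinearMap.mulLeft K (C b * d⁄dX K x)

noncomputable def stepOp (x : K⟦X⟧) (b j : K) : K⟦X⟧ →ₗ[K] K⟦X⟧ :=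
  LinearMap.mulLeft K (x * d⁄dX K x) ∘ₗ (d⁄dX K).toLinearMap -
    LinearMap.mulLeft K (C b * d⁄dX K x ^ 2 + C j * d⁄dX K (d⁄dX K x) * x)

theorem firstOp_apply (x : K⟦X⟧) (b : K) (f : K⟦X⟧) :
    firstOp x b f = x * d⁄dX K f - C b * d⁄dX K x * f :=
  rfl

theorem stepOp_apply (x : K⟦X⟧) (b j : K) (f : K⟦X⟧) :
    stepOp x b j f =
      x * d⁄dX K x * d⁄dX K f - (C b * d⁄dX K x ^ 2 + C j * d⁄dX K (d⁄dX K x) * x) * f :=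
  rfl

variable {p : ℕ}

theorem firstOp_pow (hp : (p : K) ≠ 0) (ξ : K⟦X⟧) (b : K) (Q : ℕ) :
    firstOp (ξ ^ p) b (ξ ^ Q) = ((Q : K) / p - b) • (d⁄dX K (ξ ^ p) * ξ ^ Q) := by
  rw [firstOp_apply, pow_mul_derivative_pow hp, smul_eq_C_mul, map_sub]
  ring

theorem stepOp_pow (hp : (p : K) ≠ 0) (ξ : K⟦X⟧) (b : K) (j Q : ℕ) :
    stepOp (ξ ^ p) b j (d⁄dX K (ξ ^ p) ^ j * ξ ^ Q) =
      ((Q : K) / p - b) • (d⁄dX K (ξ ^ p) ^ (j + 2) * ξ ^ Q) := by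
  have hx := pow_mul_derivative_pow hp ξ Q
  rw [stepOp_apply, Derivation.leibniz, smul_eq_mul, smul_eq_mul, smul_eq_C_mul, map_sub]
  generalize d⁄dX K (ξ ^ p) = u, d⁄dX K (ξ ^ Q) = v at hx ⊢
  rcases j with _ | j
  · simp only [pow_zero, Derivation.map_one_eq_zero, Nat.cast_zero, map_zero]
    linear_combination u * hx
  · rw [derivative_pow, Nat.add_sub_cancel, ← map_natCast (C (R := K))]
    linear_combination u ^ (j + 2) * hx

theorem X_pow_dvd_firstOp {e N : ℕ} {x f : K⟦X⟧} (hx : X ^ (e + 1) ∣ x) (hf : X ^ (N + 1) ∣ f)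
    (b : K) : X ^ (N + e + 1) ∣ firstOp x b f := by
  have hx' := X_pow_sub_one_dvd_derivative hx
  have hf' := X_pow_sub_one_dvd_derivative hf
  rw [Nat.add_sub_cancel] at hx' hf'
  rw [firstOp_apply]
  refine dvd_sub ?_ ?_
  · rw [show N + e + 1 = e + 1 + N by omega, pow_add]
    exact mul_dvd_mul hx hf'
  · rw [show N + e + 1 = e + (N + 1) by omega, pow_add, mul_comm (C b)]
    exact mul_dvd_mul (dvd_mul_of_dvd_left hx' _) hf

theorem X_pow_dvd_stepOp {e N : ℕ} {x f : K⟦X⟧} (hx : X ^ (e + 1) ∣ x) (hf : X ^ (N + 1) ∣ f)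
    (b j : K) : X ^ (N + 2 * e + 1) ∣ stepOp x b j f := by
  have hx' := X_pow_sub_one_dvd_derivative hx
  have hf' := X_pow_sub_one_dvd_derivative hf
  rw [Nat.add_sub_cancel] at hx' hf'
  have hx'' := X_pow_sub_one_dvd_derivative hx'
  have hcoeff : X ^ (2 * e) ∣ C b * d⁄dX K x ^ 2 + C j * d⁄dX K (d⁄dX K x) * x := by
    refine dvd_add (dvd_mul_of_dvd_right ?_ _) ?_
    · rw [mul_comm, pow_mul]
      exact pow_dvd_pow_of_dvd hx' 2
    · refine (pow_dvd_pow X (by omega : 2 * e ≤ e - 1 + (e + 1))).trans ?_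
      rw [pow_add]
      exact mul_dvd_mul (dvd_mul_of_dvd_right hx'' _) hx
  rw [stepOp_apply]
  refine dvd_sub ?_ ?_
  · rw [show N + 2 * e + 1 = e + 1 + e + N by omega, pow_add, pow_add]
    exact mul_dvd_mul (mul_dvd_mul hx hx') hf'
  · rw [show N + 2 * e + 1 = 2 * e + (N + 1) by omega, pow_add]
    exact mul_dvd_mul hcoeff hf

/-- The part of `P n` produced by the Puiseux terms `c m • ξ ^ q m` with `m ≤ M`. -/
noncomputable def puiseuxPartial (p : ℕ) (q : ℕ → ℕ) (c : ℕ → K) (ξ : K⟦X⟧) (n M : ℕ) : K⟦X⟧ :=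
  ∑ m ∈ range (M + 1),
    ((∏ k ∈ range n, ((q m : K) - q k) / p) * c m) • (d⁄dX K (ξ ^ p) ^ (2 * n - 1) * ξ ^ q m)

variable (q : ℕ → ℕ) (c : ℕ → K) (ξ : K⟦X⟧) (M : ℕ)

theorem firstOp_sum_puiseux (hp : (p : K) ≠ 0) :
    firstOp (ξ ^ p) ((q 0 : K) / p) (∑ m ∈ range (M + 1), c m • ξ ^ q m) =
      puiseuxPartial p q c ξ 1 M := by
  simp only [puiseuxPartial, map_sum, map_smul, firstOp_pow hp, smul_smul, prod_range_one,
    Nat.mul_one, Nat.reduceSub, pow_one, sub_div, mul_comm (c _)]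

theorem stepOp_puiseuxPartial (hp : (p : K) ≠ 0) {n : ℕ} (hn : 1 ≤ n) :
    stepOp (ξ ^ p) ((q n : K) / p) (2 * n - 1 : ℕ) (puiseuxPartial p q c ξ n M) =
      puiseuxPartial p q c ξ (n + 1) M := by
  simp only [puiseuxPartial, map_sum, map_smul, stepOp_pow hp, smul_smul, prod_range_succ,
    show 2 * n - 1 + 2 = 2 * (n + 1) - 1 by omega, sub_div]
  exact sum_congr rfl fun m _ => by ring_nf

theorem puiseuxPartial_self (n : ℕ) :
    puiseuxPartial p q c ξ n n =
      ((∏ k ∈ range n, ((q n : K) - q k) / p) * c n) • (d⁄dX K (ξ ^ p) ^ (2 * n - 1) * ξ ^ q n) := by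
  rw [puiseuxPartial, sum_range_succ, sum_eq_zero, zero_add]
  intro m hm
  rw [prod_eq_zero hm (by simp), zero_mul, zero_smul]

theorem exists_eq_puiseuxPartial_add [CharZero K] (hp : 0 < p) (hq : StrictMono q) {y : K⟦X⟧}
    (hξ : constantCoeff ξ = 0)
    (hy : ∀ n, coeff n y = ∑ k ∈ range (n + 1), c k * coeff n (ξ ^ q k)) {P : ℕ → K⟦X⟧}
    (hP1 : P 1 = firstOp (ξ ^ p) ((q 0 : K) / p) y)
    (hPrec : ∀ n, 1 ≤ n → P (n + 1) = stepOp (ξ ^ p) ((q n : K) / p) (2 * n - 1 : ℕ) (P n))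
    {n : ℕ} (hn : 1 ≤ n) :
    ∃ R, P n = puiseuxPartial p q c ξ n M + R ∧ X ^ (q M + (2 * n - 1) * (p - 1) + 1) ∣ R := by
  have hpK : (p : K) ≠ 0 := Nat.cast_ne_zero.2 hp.ne'
  have hx : X ^ (p - 1 + 1) ∣ ξ ^ p := by
    rw [Nat.sub_add_cancel hp]
    exact pow_dvd_pow_of_dvd (X_dvd_iff.2 hξ) p
  induction n, hn using Nat.le_induction with
  | base =>
    refine ⟨firstOp (ξ ^ p) ((q 0 : K) / p) (y - ∑ m ∈ range (M + 1), c m • ξ ^ q m), ?_, ?_⟩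
    · rw [hP1, ← firstOp_sum_puiseux q c ξ M hpK, ← map_add, add_sub_cancel]
    · simpa only [Nat.mul_one, Nat.reduceSub, one_mul] using
        X_pow_dvd_firstOp hx (X_pow_dvd_sub_sum_puiseux hξ hq hy M) _
  | succ n hn ih =>
    obtain ⟨R, hPR, hR⟩ := ih
    refine ⟨stepOp (ξ ^ p) ((q n : K) / p) (2 * n - 1 : ℕ) R, ?_, ?_⟩
    · rw [hPrec n hn, hPR, map_add, stepOp_puiseuxPartial q c ξ M hpK hn]
    · convert X_pow_dvd_stepOp hx hR _ _ using 3
      rw [show 2 * (n + 1) - 1 = 2 * n - 1 + 2 by omega]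
      ring

end Recursion

theorem stmt9_general (p : ℕ) (hp : 1 < p) (q : ℕ → ℕ) (hq : StrictMono q)
    (x y ξ : PowerSeries ℂ) (c : ℕ → ℂ)
    (hξ0 : constantCoeff ξ = 0)
    (hξp : ξ ^ p = x)
    (hpuis : ∀ n, coeff n y =
      ∑ k ∈ Finset.range (n + 1), c k * coeff n (ξ ^ (q k)))
    (P : ℕ → PowerSeries ℂ)
    (hP1 : P 1 = pderiv' y * x - C ((q 0 : ℂ) / p) * y * pderiv' x)
    (hPrec : ∀ n, 1 ≤ n → P (n + 1) =
      x * pderiv' x * pderiv' (P n)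
        - (C ((q n : ℂ) / p) * (pderiv' x) ^ 2
            + C (2 * (n : ℂ) - 1) * pderiv' (pderiv' x) * x) * P n) :
    ∀ n, 1 ≤ n → ∃ R : PowerSeries ℂ,
      P n = C (∏ k ∈ Finset.range n, ((q n : ℂ) - (q k : ℂ)) / p)
              * C (c n) * (pderiv' x) ^ (2 * n - 1) * ξ ^ (q n) + R ∧
      ((q n + (2 * n - 1) * (p - 1) : ℕ) : ℕ∞) < R.order ∧
      ((q n + (2 * n - 1) * (p - 1) : ℕ) : ℕ∞) ≤ (P n).order := by
  subst hξp
  simp only [pderiv'_eq_derivative] at hP1 hPrec ⊢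
  have hP1' : P 1 = firstOp (ξ ^ p) ((q 0 : ℂ) / p) y := by
    rw [hP1, firstOp_apply]
    ring
  have hPrec' (n : ℕ) (hn : 1 ≤ n) :
      P (n + 1) = stepOp (ξ ^ p) ((q n : ℂ) / p) (2 * n - 1 : ℕ) (P n) := by
    rw [hPrec n hn, stepOp_apply, Nat.cast_sub (by omega)]
    push_cast
    rfl
  intro n hn
  obtain ⟨R, hPR, hR⟩ :=
    exists_eq_puiseuxPartial_add q c ξ n (by omega) hq hξ0 hpuis hP1' hPrec' hn
  rw [puiseuxPartial_self, smul_eq_C_mul, map_mul] at hPR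
  have hlead : X ^ (q n + (2 * n - 1) * (p - 1)) ∣ (d⁄dX ℂ (ξ ^ p)) ^ (2 * n - 1) * ξ ^ q n := by
    have hx' := X_pow_sub_one_dvd_derivative (pow_dvd_pow_of_dvd (X_dvd_iff.2 hξ0) p)
    rw [add_comm, pow_add, pow_mul']
    exact mul_dvd_mul (pow_dvd_pow_of_dvd hx' _) (pow_dvd_pow_of_dvd (X_dvd_iff.2 hξ0) _)
  refine ⟨R, by rw [hPR]; ring, ?_, ?_⟩
  · exact (Nat.cast_lt.2 (Nat.lt_succ_self _)).trans_le (nat_le_order _ _ (X_pow_dvd_iff.1 hR))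
  · refine nat_le_order _ _ (X_pow_dvd_iff.1 ?_)
    rw [hPR]
    exact dvd_add (dvd_mul_of_dvd_right hlead _) ((pow_dvd_pow X (Nat.le_succ _)).trans hR)

/-- Define P₁ = ẏx − (q₀/p)yẋ and recursively
P_{n+1} = x·ẋ·P_n' − ((q_n/p)·ẋ² + (2n−1)·ẍ·x)·P_n. If y = Σ_k c_k x^{q_k/p}
is the Puiseux expansion (x = ξᵖ, ord ξ = 1), then
P_n = (∏_{k<n} (q_n−q_k)/p)·c_n·ẋ^{2n−1}·x^{q_n/p} + higher order terms;
in particular ord_t P_n ≥ q_n + (2n−1)(p−1). -/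
theorem stmt9 (p : ℕ) (hp : 1 < p) (q : ℕ → ℕ) (hq : StrictMono q)
    (x y ξ : PowerSeries ℂ) (c : ℕ → ℂ)
    (hξ0 : constantCoeff ξ = 0) (hξ1 : coeff 1 ξ ≠ 0)
    (hξp : ξ ^ p = x)
    (hpuis : ∀ n, coeff n y =
      ∑ k ∈ Finset.range (n + 1), c k * coeff n (ξ ^ (q k)))
    (P : ℕ → PowerSeries ℂ)
    (hP1 : P 1 = pderiv' y * x - C ((q 0 : ℂ) / p) * y * pderiv' x)
    (hPrec : ∀ n, 1 ≤ n → P (n + 1) =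
      x * pderiv' x * pderiv' (P n)
        - (C ((q n : ℂ) / p) * (pderiv' x) ^ 2
            + C (2 * (n : ℂ) - 1) * pderiv' (pderiv' x) * x) * P n) :
    ∀ n, 1 ≤ n → ∃ R : PowerSeries ℂ,
      P n = C (∏ k ∈ Finset.range n, ((q n : ℂ) - (q k : ℂ)) / p)
              * C (c n) * (pderiv' x) ^ (2 * n - 1) * ξ ^ (q n) + R ∧
      ((q n + (2 * n - 1) * (p - 1) : ℕ) : ℕ∞) < R.order ∧
      ((q n + (2 * n - 1) * (p - 1) : ℕ) : ℕ∞) ≤ (P n).order :=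
  stmt9_general p hp q hq x y ξ c hξ0 hξp hpuis P hP1 hPrec
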